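/- arXiv:2412.09253 — 4 statements merged into one kernel-verified Lean document; each statement's English description precedes it below -/
import Mathlib

section
/- Let p ∈ (0,1), χ > 0, u_- > 0 and s = √(χ u_-). Then there exists a C¹ function U : ℝ → ℝ with U(0) = u_- /2, 0 < U(z) < u_- for all z ∈ ℝ, solving the ODE U'(z) = (χ/(s p)) U(z)^{2-p} (U(z) − u_-) on all of ℝ; moreover U'(z) < 0 for every z, U(z) → u_- as z → −∞, U(z) → 0 as z → +∞, and U is unique up to translation: any C¹ function Ũ : ℝ → ℝ with 0 < Ũ < u_- solving the same ODE on ℝ satisfies Ũ(z) = U(z + z₀) for some z₀ ∈ ℝ. In addition, the function V(z) = −U(z)/s satisfies V'(z) > 0 for all z, V(+∞) = 0 and V(−∞) = −u_- /s. -/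
open Real Filter MeasureTheory Set intervalIntegral Topology

section Aux

variable {p c um : ℝ}

/-- The RHS of the ODE / reciprocal of integrand. -/
noncomputable def dd (p c um : ℝ) (t : ℝ) : ℝ := c * t ^ (2 - p) * (t - um)

noncomputable def gg (p c um : ℝ) (t : ℝ) : ℝ := (dd p c um t)⁻¹

noncomputable def FF (p c um : ℝ) (x : ℝ) : ℝ := ∫ t in (um/2)..x, gg p c um t

lemma dd_neg (hp1 : p < 1) (hc : 0 < c) {t : ℝ} (ht0 : 0 < t) (htum : t < um) :
    dd p c um t < 0 := by
  have h1 : 0 < t ^ (2 - p) := Real.rpow_pos_of_pos ht0 _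
  have : 0 < c * t ^ (2 - p) := mul_pos hc h1
  exact mul_neg_of_pos_of_neg this (by linarith)

lemma gg_neg (hp1 : p < 1) (hc : 0 < c) {t : ℝ} (ht0 : 0 < t) (htum : t < um) :
    gg p c um t < 0 := inv_neg''.mpr (dd_neg hp1 hc ht0 htum)

lemma dd_contAt {t : ℝ} (ht0 : 0 < t) : ContinuousAt (dd p c um) t := by
  have h1 : ContinuousAt (fun x : ℝ => x ^ (2 - p)) t :=
    Real.continuousAt_rpow_const t (2 - p) (Or.inl ht0.ne')
  exact (continuousAt_const.mul h1).mul (continuousAt_id.sub continuousAt_const)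

lemma gg_contAt (hp1 : p < 1) (hc : 0 < c) {t : ℝ} (ht0 : 0 < t) (htum : t < um) :
    ContinuousAt (gg p c um) t :=
  (dd_contAt ht0).inv₀ (dd_neg hp1 hc ht0 htum).ne

lemma gg_contOn (hp1 : p < 1) (hc : 0 < c) : ContinuousOn (gg p c um) (Ioo 0 um) :=
  fun t ht => (gg_contAt hp1 hc ht.1 ht.2).continuousWithinAt

lemma gg_intble (hp1 : p < 1) (hc : 0 < c) {a b : ℝ} (ha : a ∈ Ioo (0:ℝ) um)
    (hb : b ∈ Ioo (0:ℝ) um) : IntervalIntegrable (gg p c um) volume a b := by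
  have hsub : uIcc a b ⊆ Ioo 0 um := (ordConnected_Ioo).uIcc_subset ha hb
  exact ((gg_contOn hp1 hc).mono hsub).intervalIntegrable

lemma FF_hasDerivAt (hp1 : p < 1) (hc : 0 < c) (hum : 0 < um) {x : ℝ}
    (hx : x ∈ Ioo (0:ℝ) um) : HasDerivAt (FF p c um) (gg p c um x) x := by
  have hmem : um / 2 ∈ Ioo (0:ℝ) um := ⟨by linarith, by linarith⟩
  refine intervalIntegral.integral_hasDerivAt_right (gg_intble hp1 hc hmem hx) ?_
    (gg_contAt hp1 hc hx.1 hx.2)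
  exact ((gg_contOn hp1 hc).stronglyMeasurableAtFilter isOpen_Ioo x) hx

end Aux

section Aux2
variable {p c um : ℝ}

lemma FF_anti (hp1 : p < 1) (hc : 0 < c) (hum : 0 < um) :
    StrictAntiOn (FF p c um) (Ioo 0 um) := by
  refine strictAntiOn_of_deriv_neg (convex_Ioo 0 um)
    (fun x hx => (FF_hasDerivAt hp1 hc hum hx).continuousAt.continuousWithinAt) ?_
  intro x hx
  rw [interior_Ioo] at hx
  rw [(FF_hasDerivAt hp1 hc hum hx).deriv]
  exact gg_neg hp1 hc hx.1 hx.2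

/-- Divergence of `FF` near `0`: values exceed any `y`. -/
lemma FF_big (hp : 0 < p) (hp1 : p < 1) (hc : 0 < c) (hum : 0 < um) (y : ℝ) :
    ∃ a ∈ Ioo (0:ℝ) um, y < FF p c um a := by
  have h1p : (0:ℝ) < 1 - p := by linarith
  -- the lower bound function tends to +∞ as a → 0⁺
  have h1 : Tendsto (fun a : ℝ => a ^ (p - 1)) (𝓝[>] (0:ℝ)) atTop := by
    have h2 : Tendsto (fun a : ℝ => (a⁻¹) ^ (1 - p)) (𝓝[>] (0:ℝ)) atTop :=
      (tendsto_rpow_atTop h1p).comp tendsto_inv_nhdsGT_zero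
    refine h2.congr' ?_
    filter_upwards [self_mem_nhdsWithin] with a (ha : 0 < a)
    rw [Real.inv_rpow ha.le, ← Real.rpow_neg ha.le, show -(1-p) = p - 1 by ring]
  have hT : Tendsto (fun a : ℝ => (c*um)⁻¹ * (((um/2) ^ (p-1) - a ^ (p-1)) / (p-1)))
      (𝓝[>] (0:ℝ)) atTop := by
    have h2 := tendsto_atTop_add_const_right _ (-((um/2:ℝ) ^ (p-1))) h1
    have h3 : (0:ℝ) < (c*um)⁻¹ * (1-p)⁻¹ := by
      have := mul_pos hc hum
      positivity
    refine (h2.const_mul_atTop h3).congr (fun a => ?_)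
    have hinv : (p-1:ℝ)⁻¹ = -(1-p)⁻¹ := by
      rw [show p-1 = -(1-p) by ring, inv_neg]
    rw [div_eq_mul_inv ((um/2:ℝ)^(p-1) - a^(p-1)) (p-1), hinv]
    ring
  have hev1 : ∀ᶠ a in 𝓝[>] (0:ℝ),
      y < (c*um)⁻¹ * (((um/2) ^ (p-1) - a ^ (p-1)) / (p-1)) := hT.eventually_gt_atTop y
  have hev2 : Ioo (0:ℝ) (um/2) ∈ 𝓝[>] (0:ℝ) :=
    Ioo_mem_nhdsGT_of_mem ⟨le_rfl, by linarith⟩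
  obtain ⟨a, hbd, ha0, ha2⟩ := (hev1.and (eventually_of_mem hev2 (fun a ha => ha))).exists
  have haIoo : a ∈ Ioo (0:ℝ) um := ⟨ha0, by linarith⟩
  refine ⟨a, haIoo, ?_⟩
  have hmemIoo : um/2 ∈ Ioo (0:ℝ) um := ⟨by linarith, by linarith⟩
  have hle : a ≤ um/2 := ha2.le
  have hpt : ∀ t ∈ Icc a (um/2), (c*um)⁻¹ * t ^ (p-2) ≤ -gg p c um t := by
    intro t ht
    have ht0 : 0 < t := lt_of_lt_of_le ha0 ht.1
    have htum : t < um := lt_of_le_of_lt ht.2 (by linarith)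
    have hX : 0 < t ^ (2-p) := Real.rpow_pos_of_pos ht0 _
    have hng : -gg p c um t = (c * t ^ (2-p) * (um - t))⁻¹ := by
      simp only [gg, dd, ← inv_neg]
      congr 1
      ring
    rw [hng]
    have hrw : (c*um)⁻¹ * t ^ (p-2) = (c * t ^ (2-p) * um)⁻¹ := by
      rw [show p - 2 = -(2-p) by ring, Real.rpow_neg ht0.le]
      rw [mul_inv, mul_inv, mul_inv]
      ring
    rw [hrw]
    apply inv_anti₀
    · exact mul_pos (mul_pos hc hX) (by linarith)
    · exact mul_le_mul_of_nonneg_left (by linarith) (mul_pos hc hX).le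
  have hi1 : IntervalIntegrable (fun t : ℝ => (c*um)⁻¹ * t ^ (p-2)) volume a (um/2) := by
    apply ContinuousOn.intervalIntegrable
    rw [uIcc_of_le hle]
    intro t ht
    exact (continuousAt_const.mul (Real.continuousAt_rpow_const t _
      (Or.inl (lt_of_lt_of_le ha0 ht.1).ne'))).continuousWithinAt
  have hi2 : IntervalIntegrable (fun t => -gg p c um t) volume a (um/2) :=
    (gg_intble hp1 hc haIoo hmemIoo).neg
  have hmono := intervalIntegral.integral_mono_on hle hi1 hi2 hpt
  have hL : ∫ t in a..(um/2), (c*um)⁻¹ * t ^ (p-2) =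
      (c*um)⁻¹ * (((um/2) ^ (p-1) - a ^ (p-1)) / (p-1)) := by
    rw [intervalIntegral.integral_const_mul, integral_rpow (Or.inr ⟨by intro h; apply hp1.ne; linarith, by
      rw [uIcc_of_le hle]; intro h; exact absurd h.1 (by linarith)⟩)]
    rw [show p - 2 + 1 = p - 1 by ring]
  have hR : ∫ t in a..(um/2), -gg p c um t = FF p c um a := by
    rw [intervalIntegral.integral_neg, intervalIntegral.integral_symm]
    simp [FF]
  rw [hL, hR] at hmono
  linarith

end Aux2

section Aux3
variable {p c um : ℝ}

/-- Divergence of `FF` near `um`: values below any `y`. -/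
lemma FF_small (hp : 0 < p) (hp1 : p < 1) (hc : 0 < c) (hum : 0 < um) (y : ℝ) :
    ∃ b ∈ Ioo (0:ℝ) um, FF p c um b < y := by
  set K : ℝ := (c * um ^ (2-p))⁻¹ with hK
  have hKpos : 0 < K := by
    rw [hK]
    have := Real.rpow_pos_of_pos hum (2-p)
    positivity
  have h1 : Tendsto (fun b : ℝ => Real.log (um - b)) (𝓝[<] um) atBot := by
    refine Real.tendsto_log_nhdsGT_zero.comp ?_
    apply tendsto_nhdsWithin_of_tendsto_nhds_of_eventually_within
    · have : Tendsto (fun b : ℝ => um - b) (𝓝 um) (𝓝 (um - um)) :=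
        (continuous_const.sub continuous_id).tendsto um
      simpa using this.mono_left nhdsWithin_le_nhds
    · filter_upwards [self_mem_nhdsWithin] with b (hb : b < um)
      exact sub_pos.mpr hb
  have hT : Tendsto (fun b : ℝ => K * (Real.log (um - b) - Real.log (um/2)))
      (𝓝[<] um) atBot := by
    have h2 := tendsto_atBot_add_const_right _ (-(Real.log (um/2))) h1
    refine (h2.const_mul_atBot hKpos).congr (fun b => ?_)
    ring
  have hev1 : ∀ᶠ b in 𝓝[<] um,
      K * (Real.log (um - b) - Real.log (um/2)) < y := hT.eventually_lt_atBot y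
  have hev2 : Ioo (um/2) um ∈ 𝓝[<] um :=
    Ioo_mem_nhdsLT_of_mem ⟨by linarith, le_rfl⟩
  obtain ⟨b, hbd, hb1, hb2⟩ := (hev1.and (eventually_of_mem hev2 (fun b hb => hb))).exists
  have hbIoo : b ∈ Ioo (0:ℝ) um := ⟨by linarith, hb2⟩
  refine ⟨b, hbIoo, ?_⟩
  have hmemIoo : um/2 ∈ Ioo (0:ℝ) um := ⟨by linarith, by linarith⟩
  have hle : um/2 ≤ b := hb1.le
  -- pointwise bound : gg t ≤ -(K * (um - t)⁻¹) on [um/2, b]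
  have hpt : ∀ t ∈ Icc (um/2) b, gg p c um t ≤ -(K * (um - t)⁻¹) := by
    intro t ht
    have ht0 : 0 < t := by have := ht.1; linarith
    have htum : t < um := lt_of_le_of_lt ht.2 hb2
    have hX : 0 < t ^ (2-p) := Real.rpow_pos_of_pos ht0 _
    have hng : gg p c um t = -((c * t ^ (2-p) * (um - t))⁻¹) := by
      simp only [gg, dd, ← inv_neg]
      congr 1
      ring
    rw [hng, neg_le_neg_iff]
    have hrw : K * (um - t)⁻¹ = (c * um ^ (2-p) * (um - t))⁻¹ := by
      rw [hK, mul_inv, mul_inv, mul_inv]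
      try ring
    rw [hrw]
    apply inv_anti₀
    · exact mul_pos (mul_pos hc hX) (by linarith)
    · have hmono : t ^ (2-p) ≤ um ^ (2-p) :=
        Real.rpow_le_rpow ht0.le htum.le (by linarith)
      have h3 : 0 < um - t := by linarith
      exact mul_le_mul_of_nonneg_right (mul_le_mul_of_nonneg_left hmono hc.le) h3.le
  have hi2 : IntervalIntegrable (fun t : ℝ => -(K * (um - t)⁻¹)) volume (um/2) b := by
    apply ContinuousOn.intervalIntegrable
    rw [uIcc_of_le hle]
    intro t ht
    have : um - t ≠ 0 := by have := ht.2; have : t < um := lt_of_le_of_lt ht.2 hb2; linarith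
    exact ((continuousAt_const.mul (((continuousAt_const.sub continuousAt_id).inv₀ this))).neg).continuousWithinAt
  have hi1 : IntervalIntegrable (gg p c um) volume (um/2) b :=
    gg_intble hp1 hc hmemIoo hbIoo
  have hmono := intervalIntegral.integral_mono_on hle hi1 hi2 hpt
  -- compute the comparison integral by FTC
  have hftc : ∫ t in (um/2)..b, (um - t)⁻¹ = Real.log (um/2) - Real.log (um - b) := by
    have hd : ∀ t ∈ uIcc (um/2) b, HasDerivAt (fun t => -Real.log (um - t)) ((um - t)⁻¹) t := by
      intro t ht
      rw [uIcc_of_le hle] at ht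
      have htum : t < um := lt_of_le_of_lt ht.2 hb2
      have h0 : um - t ≠ 0 := by linarith
      have hlin : HasDerivAt (fun t : ℝ => um - t) (-1) t := by
        simpa using (hasDerivAt_id t).const_sub um
      have := (Real.hasDerivAt_log h0).comp t hlin
      have h2 := this.neg
      have h3 : (um - t)⁻¹ = -((um - t)⁻¹ * -1) := by ring
      rw [h3]
      exact h2
    have hint : IntervalIntegrable (fun t : ℝ => (um - t)⁻¹) volume (um/2) b := by
      apply ContinuousOn.intervalIntegrable
      rw [uIcc_of_le hle]
      intro t ht
      have : um - t ≠ 0 := by have : t < um := lt_of_le_of_lt ht.2 hb2; linarith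
      exact ((continuousAt_const.sub continuousAt_id).inv₀ this).continuousWithinAt
    rw [intervalIntegral.integral_eq_sub_of_hasDerivAt hd hint]
    have : um - um/2 = um/2 := by ring
    rw [this]
    ring
  have hcomp : ∫ t in (um/2)..b, -(K * (um - t)⁻¹) =
      K * (Real.log (um - b) - Real.log (um/2)) := by
    rw [intervalIntegral.integral_neg, intervalIntegral.integral_const_mul, hftc]
    ring
  rw [hcomp] at hmono
  have : FF p c um b ≤ K * (Real.log (um - b) - Real.log (um/2)) := hmono
  linarith

end Aux3

section Aux4
variable {p c um : ℝ}

lemma FF_surj (hp : 0 < p) (hp1 : p < 1) (hc : 0 < c) (hum : 0 < um) (y : ℝ) :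
    ∃ x, x ∈ Ioo (0:ℝ) um ∧ FF p c um x = y := by
  obtain ⟨a, haIoo, hay⟩ := FF_big hp hp1 hc hum y
  obtain ⟨b, hbIoo, hby⟩ := FF_small hp hp1 hc hum y
  have hab : a < b := by
    rcases lt_trichotomy a b with h | h | h
    · exact h
    · exfalso; rw [h] at hay; linarith
    · exfalso
      have := FF_anti hp1 hc hum hbIoo haIoo h
      linarith
  have hcont : ContinuousOn (FF p c um) (Icc a b) := by
    intro x hx
    have hxIoo : x ∈ Ioo (0:ℝ) um :=
      ⟨lt_of_lt_of_le haIoo.1 hx.1, lt_of_le_of_lt hx.2 hbIoo.2⟩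
    exact (FF_hasDerivAt hp1 hc hum hxIoo).continuousAt.continuousWithinAt
  have hIVT := intermediate_value_Icc' hab.le hcont
  have hyIcc : y ∈ Icc (FF p c um b) (FF p c um a) := ⟨hby.le, hay.le⟩
  obtain ⟨x, hxIcc, hxy⟩ := hIVT hyIcc
  exact ⟨x, ⟨lt_of_lt_of_le haIoo.1 hxIcc.1, lt_of_le_of_lt hxIcc.2 hbIoo.2⟩, hxy⟩

/-- Main construction lemma. -/
lemma exists_U (hp : 0 < p) (hp1 : p < 1) (hc : 0 < c) (hum : 0 < um) :
    ∃ U : ℝ → ℝ,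
      ContDiff ℝ 1 U ∧
      U 0 = um / 2 ∧
      (∀ z, 0 < U z ∧ U z < um) ∧
      (∀ z, HasDerivAt U (c * U z ^ (2 - p) * (U z - um)) z) ∧
      Tendsto U atBot (nhds um) ∧
      Tendsto U atTop (nhds 0) ∧
      (∀ Ut : ℝ → ℝ, (∀ z, 0 < Ut z ∧ Ut z < um) →
        (∀ z, HasDerivAt Ut (c * Ut z ^ (2 - p) * (Ut z - um)) z) →
        ∃ z₀ : ℝ, ∀ z, Ut z = U (z + z₀)) := by
  have hanti := FF_anti hp1 hc hum
  choose U hUmem hUF using FF_surj hp hp1 hc hum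
  have hFU : ∀ x ∈ Ioo (0:ℝ) um, U (FF p c um x) = x := by
    intro x hx
    exact hanti.injOn (hUmem _) hx (hUF _)
  have hUanti : StrictAnti U := by
    intro z1 z2 h
    rcases lt_trichotomy (U z2) (U z1) with h' | h' | h'
    · exact h'
    · exfalso
      have : FF p c um (U z1) = FF p c um (U z2) := by rw [h']
      rw [hUF, hUF] at this
      exact absurd this h.ne
    · exfalso
      have := hanti (hUmem z1) (hUmem z2) h'
      rw [hUF, hUF] at this
      exact absurd this (not_lt.mpr h.le)
  -- continuity of U
  have hUcont : ∀ z, ContinuousAt U z := by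
    intro z
    rw [Metric.continuousAt_iff]
    intro ε hε
    obtain ⟨hUz0, hUzum⟩ := hUmem z
    set ε' : ℝ := min (ε/2) (min (U z / 2) ((um - U z) / 2)) with hε'
    have hε'pos : 0 < ε' := by
      apply lt_min (by linarith)
      exact lt_min (by linarith) (by linarith)
    have hloIoo : U z - ε' ∈ Ioo (0:ℝ) um := by
      constructor
      · have : ε' ≤ U z / 2 := le_trans (min_le_right _ _) (min_le_left _ _)
        linarith
      · linarith
    have hhiIoo : U z + ε' ∈ Ioo (0:ℝ) um := by
      constructor
      · linarith
      · have : ε' ≤ (um - U z) / 2 := le_trans (min_le_right _ _) (min_le_right _ _)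
        linarith
    have h1 : FF p c um (U z + ε') < z := by
      have := hanti (hUmem z) hhiIoo (by linarith)
      rwa [hUF] at this
    have h2 : z < FF p c um (U z - ε') := by
      have := hanti hloIoo (hUmem z) (by linarith)
      rwa [hUF] at this
    refine ⟨min (z - FF p c um (U z + ε')) (FF p c um (U z - ε') - z),
      lt_min (by linarith) (by linarith), ?_⟩
    intro z' hz'
    rw [Real.dist_eq, abs_lt] at hz'
    obtain ⟨hz'1, hz'2⟩ := hz'
    have hlt1 : FF p c um (U z + ε') < z' := by
      have : -(z - FF p c um (U z + ε')) ≤ -(min (z - FF p c um (U z + ε')) (FF p c um (U z - ε') - z)) := by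
        apply neg_le_neg
        exact min_le_left _ _
      linarith
    have hlt2 : z' < FF p c um (U z - ε') := by
      have : min (z - FF p c um (U z + ε')) (FF p c um (U z - ε') - z) ≤ FF p c um (U z - ε') - z := min_le_right _ _
      linarith
    have hU1 : U z' < U z + ε' := by
      have := hUanti hlt1
      rwa [hFU _ hhiIoo] at this
    have hU2 : U z - ε' < U z' := by
      have := hUanti hlt2
      rwa [hFU _ hloIoo] at this
    rw [Real.dist_eq, abs_lt]
    have hεle : ε' ≤ ε/2 := min_le_left _ _
    constructor
    · linarith
    · linarith
  -- derivative of U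
  have hUderiv : ∀ z, HasDerivAt U (c * U z ^ (2 - p) * (U z - um)) z := by
    intro z
    have h1 : HasDerivAt (FF p c um) (gg p c um (U z)) (U z) :=
      FF_hasDerivAt hp1 hc hum (hUmem z)
    have h2 : gg p c um (U z) ≠ 0 :=
      (gg_neg hp1 hc (hUmem z).1 (hUmem z).2).ne
    have h3 := HasDerivAt.of_local_left_inverse (hUcont z) h1 h2
      (Filter.Eventually.of_forall hUF)
    have h4 : (gg p c um (U z))⁻¹ = c * U z ^ (2 - p) * (U z - um) := by
      simp [gg, dd]
    rwa [h4] at h3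
  -- value at 0
  have hFhalf : FF p c um (um/2) = 0 := intervalIntegral.integral_same
  have hU0 : U 0 = um / 2 := by
    have := hFU (um/2) ⟨by linarith, by linarith⟩
    rw [hFhalf] at this
    exact this
  -- ContDiff
  have hUcont' : Continuous U := continuous_iff_continuousAt.mpr hUcont
  have hCD : ContDiff ℝ 1 U := by
    rw [contDiff_one_iff_deriv]
    constructor
    · exact fun z => (hUderiv z).differentiableAt
    · have hde : deriv U = fun z => c * U z ^ (2 - p) * (U z - um) :=
        funext fun z => (hUderiv z).deriv
      rw [hde]
      apply continuous_iff_continuousAt.mpr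
      intro z
      have h1 : ContinuousAt (fun x : ℝ => x ^ (2 - p)) (U z) :=
        Real.continuousAt_rpow_const _ _ (Or.inl (hUmem z).1.ne')
      exact (continuousAt_const.mul (h1.comp (hUcont z))).mul ((hUcont z).sub continuousAt_const)
  -- limits
  have hlimTop : Tendsto U atTop (nhds 0) := by
    have hbdd : BddBelow (Set.range U) := ⟨0, fun x ⟨z, hz⟩ => hz ▸ (hUmem z).1.le⟩
    have htend := tendsto_atTop_ciInf hUanti.antitone hbdd
    set L := ⨅ z, U z with hL
    have hL0 : 0 ≤ L := le_ciInf fun z => (hUmem z).1.le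
    rcases eq_or_lt_of_le hL0 with h | h
    · rwa [← h] at htend
    · exfalso
      have hLum : L < um := by
        have : L ≤ U 0 := ciInf_le hbdd 0
        rw [hU0] at this
        linarith
      have hLIoo : L ∈ Ioo (0:ℝ) um := ⟨h, hLum⟩
      have hub : ∀ z : ℝ, z < FF p c um L := by
        intro z
        have hlt : L < U z := lt_of_le_of_lt (ciInf_le hbdd (z+1)) (hUanti (by linarith : z < z + 1))
        have := hanti hLIoo (hUmem z) hlt
        rwa [hUF] at this
      exact absurd (hub (FF p c um L)) (lt_irrefl _)
  have hlimBot : Tendsto U atBot (nhds um) := by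
    have hbdd : BddAbove (Set.range U) := ⟨um, fun x ⟨z, hz⟩ => hz ▸ (hUmem z).2.le⟩
    have htend := tendsto_atBot_ciSup hUanti.antitone hbdd
    set M := ⨆ z, U z with hM
    have hMum : M ≤ um := ciSup_le fun z => (hUmem z).2.le
    rcases eq_or_lt_of_le hMum with h | h
    · rwa [h] at htend
    · exfalso
      have hM0 : 0 < M := by
        have : U 0 ≤ M := le_ciSup hbdd 0
        rw [hU0] at this
        linarith
      have hMIoo : M ∈ Ioo (0:ℝ) um := ⟨hM0, h⟩
      have hub : ∀ z : ℝ, FF p c um M < z := by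
        intro z
        have hlt : U z < M := lt_of_lt_of_le (hUanti (by linarith : z - 1 < z)) (le_ciSup hbdd (z-1))
        have := hanti (hUmem z) hMIoo hlt
        rwa [hUF] at this
      exact absurd (hub (FF p c um M)) (lt_irrefl _)
  -- uniqueness
  refine ⟨U, hCD, hU0, hUmem, hUderiv, hlimBot, hlimTop, ?_⟩
  intro Ut hUtmem hUtderiv
  have hkey : ∀ z, HasDerivAt (fun w => FF p c um (Ut w) - w) 0 z := by
    intro z
    have h1 : HasDerivAt (FF p c um) (gg p c um (Ut z)) (Ut z) :=
      FF_hasDerivAt hp1 hc hum ⟨(hUtmem z).1, (hUtmem z).2⟩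
    have h2 := h1.comp z (hUtderiv z)
    have h3 : gg p c um (Ut z) * (c * Ut z ^ (2 - p) * (Ut z - um)) = 1 := by
      rw [show c * Ut z ^ (2 - p) * (Ut z - um) = dd p c um (Ut z) from rfl]
      exact inv_mul_cancel₀ (dd_neg hp1 hc (hUtmem z).1 (hUtmem z).2).ne
    rw [h3] at h2
    have h5 := h2.sub (hasDerivAt_id z)
    rw [sub_self] at h5
    exact h5
  have hconst : ∀ z : ℝ, FF p c um (Ut z) - z = FF p c um (Ut 0) - 0 := by
    intro z
    exact is_const_of_deriv_eq_zero (fun w => (hkey w).differentiableAt)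
      (fun w => (hkey w).deriv) z 0
  refine ⟨FF p c um (Ut 0), fun z => ?_⟩
  have h1 : FF p c um (Ut z) = z + FF p c um (Ut 0) := by
    have := hconst z
    linarith
  have h2 : U (FF p c um (Ut z)) = Ut z := hFU _ ⟨(hUtmem z).1, (hUtmem z).2⟩
  rw [h1] at h2
  exact h2.symm

end Aux4

/-- Existence, monotonicity, end-state limits and uniqueness up to translation
of the traveling-wave profile `U` for the fast-diffusion chemotaxis system, together with
the properties of `V = -U/s`. -/
theorem stmt_0 (p χ um : ℝ) (hp : 0 < p) (hp1 : p < 1) (hχ : 0 < χ) (hum : 0 < um)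
    (s : ℝ) (hs : s = Real.sqrt (χ * um)) :
    ∃ U : ℝ → ℝ,
      ContDiff ℝ 1 U ∧
      U 0 = um / 2 ∧
      (∀ z, 0 < U z ∧ U z < um) ∧
      (∀ z, HasDerivAt U (χ / (s * p) * U z ^ (2 - p) * (U z - um)) z) ∧
      (∀ z, deriv U z < 0) ∧
      Tendsto U atBot (nhds um) ∧
      Tendsto U atTop (nhds 0) ∧
      (∀ Ut : ℝ → ℝ, ContDiff ℝ 1 Ut → (∀ z, 0 < Ut z ∧ Ut z < um) →
        (∀ z, HasDerivAt Ut (χ / (s * p) * Ut z ^ (2 - p) * (Ut z - um)) z) →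
        ∃ z₀ : ℝ, ∀ z, Ut z = U (z + z₀)) ∧
      (∀ z, 0 < deriv (fun y => -U y / s) z) ∧
      Tendsto (fun y => -U y / s) atTop (nhds 0) ∧
      Tendsto (fun y => -U y / s) atBot (nhds (-um / s)) := by
  have hspos : 0 < s := by
    rw [hs]
    exact Real.sqrt_pos.mpr (mul_pos hχ hum)
  set c : ℝ := χ / (s * p) with hc
  have hcpos : 0 < c := div_pos hχ (mul_pos hspos hp)
  obtain ⟨U, hCD, hU0, hUmem, hUderiv, hlimBot, hlimTop, huniq⟩ :=
    exists_U hp hp1 hcpos hum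
  have hderivval : ∀ z, deriv U z = c * U z ^ (2 - p) * (U z - um) :=
    fun z => (hUderiv z).deriv
  have hderivneg : ∀ z, deriv U z < 0 := by
    intro z
    rw [hderivval z]
    exact mul_neg_of_pos_of_neg
      (mul_pos hcpos (Real.rpow_pos_of_pos (hUmem z).1 _))
      (by linarith [(hUmem z).2])
  have hVderiv : ∀ z, HasDerivAt (fun y => -U y / s)
      (-(c * U z ^ (2 - p) * (U z - um)) / s) z :=
    fun z => ((hUderiv z).neg).div_const s
  refine ⟨U, hCD, hU0, hUmem, hUderiv, hderivneg, hlimBot, hlimTop, ?_, ?_, ?_, ?_⟩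
  · intro Ut _ hUtmem hUtderiv
    exact huniq Ut hUtmem hUtderiv
  · intro z
    rw [(hVderiv z).deriv]
    have h1 : c * U z ^ (2 - p) * (U z - um) < 0 := by
      rw [← hderivval z]; exact hderivneg z
    exact div_pos (by linarith) hspos
  · have := hlimTop.neg.div_const s
    simpa using this
  · exact hlimBot.neg.div_const s
end

section
/- Fix p ∈ (0,1), χ > 0, u_- > 0, s = √(χ u_-), and let U : ℝ → ℝ be the traveling-wave profile, i.e. the C¹ solution of U'(z) = (χ/(s p)) U(z)^{2−p}(U(z) − u_-) with U(0) = u_- /2 and 0 < U < u_- on ℝ. Then there exist positive constants c₁ ≤ c₂ and C₁ ≤ C₂ such that c₁ z^{−1/(1−p)} ≤ U(z) ≤ c₂ z^{−1/(1−p)} for all z ≥ 1, and C₁ e^{κ z} ≤ u_- − U(z) ≤ C₂ e^{κ z} for all z ≤ −1, where κ = (χ/(s p)) u_-^{2−p}. -/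
open Real Filter MeasureTheory

/-- Mean-value type inequality: for `0 < a ≤ b` and `1 ≤ r`,
`b^r - a^r ≤ r * b^(r-1) * (b - a)`. -/
lemma rpow_sub_le_aux {a b r : ℝ} (ha : 0 < a) (hab : a ≤ b) (hr : 1 ≤ r) :
    b ^ r - a ^ r ≤ r * b ^ (r - 1) * (b - a) := by
  have hb : 0 < b := lt_of_lt_of_le ha hab
  have hd : ∀ x : ℝ, HasDerivAt (fun x : ℝ => r * b ^ (r - 1) * x - x ^ r)
      (r * b ^ (r - 1) - r * x ^ (r - 1)) x := by
    intro x
    have h1 : HasDerivAt (fun x : ℝ => r * b ^ (r - 1) * x) (r * b ^ (r - 1)) x := by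
      simpa using (hasDerivAt_id x).const_mul (r * b ^ (r - 1))
    have h2 : HasDerivAt (fun x : ℝ => x ^ r) (r * x ^ (r - 1)) x :=
      Real.hasDerivAt_rpow_const (Or.inr hr)
    exact h1.sub h2
  have hmono : MonotoneOn (fun x : ℝ => r * b ^ (r - 1) * x - x ^ r) (Set.Icc a b) := by
    apply monotoneOn_of_deriv_nonneg (convex_Icc a b)
    · exact fun x _ => (hd x).differentiableAt.continuousAt.continuousWithinAt
    · exact fun x _ => (hd x).differentiableAt.differentiableWithinAt
    · intro x hx
      rw [interior_Icc] at hx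
      rw [(hd x).deriv]
      have hx0 : 0 ≤ x := le_of_lt (ha.trans hx.1)
      have hle : x ^ (r - 1) ≤ b ^ (r - 1) :=
        Real.rpow_le_rpow hx0 (le_of_lt hx.2) (by linarith)
      nlinarith
  have h := hmono (Set.left_mem_Icc.2 hab) (Set.right_mem_Icc.2 hab) hab
  simp only at h
  nlinarith

set_option maxHeartbeats 1600000 in
/-- two-sided algebraic decay of the traveling-wave profile at `+∞` and
two-sided exponential convergence to `u₋` at `-∞`, with rate `κ = (χ/(s p)) u₋^{2-p}`. -/
theorem stmt_1 (p χ um : ℝ) (hp : 0 < p) (hp1 : p < 1) (hχ : 0 < χ) (hum : 0 < um)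
    (s : ℝ) (hs : s = Real.sqrt (χ * um))
    (U : ℝ → ℝ) (hUC : ContDiff ℝ 1 U) (hU0 : U 0 = um / 2)
    (hUrange : ∀ z, 0 < U z ∧ U z < um)
    (hUode : ∀ z, HasDerivAt U (χ / (s * p) * U z ^ (2 - p) * (U z - um)) z) :
    ∃ c₁ c₂ C₁ C₂ : ℝ, 0 < c₁ ∧ c₁ ≤ c₂ ∧ 0 < C₁ ∧ C₁ ≤ C₂ ∧
      (∀ z : ℝ, 1 ≤ z →
        c₁ * z ^ (-(1 / (1 - p))) ≤ U z ∧ U z ≤ c₂ * z ^ (-(1 / (1 - p)))) ∧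
      (∀ z : ℝ, z ≤ -1 →
        C₁ * Real.exp (χ / (s * p) * um ^ (2 - p) * z) ≤ um - U z ∧
        um - U z ≤ C₂ * Real.exp (χ / (s * p) * um ^ (2 - p) * z)) := by
  have hs0 : 0 < s := by rw [hs]; positivity
  set α := χ / (s * p) with hαdef
  clear_value α
  have hα0 : 0 < α := by rw [hαdef]; positivity
  have hUpos : ∀ z, 0 < U z := fun z => (hUrange z).1
  have hUlt : ∀ z, U z < um := fun z => (hUrange z).2
  have h1p : (0 : ℝ) < 1 - p := by linarith
  -- U is strictly decreasing
  have hanti : StrictAnti U := by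
    apply strictAnti_of_deriv_neg
    intro x
    rw [(hUode x).deriv]
    have h2 : (0 : ℝ) < U x ^ (2 - p) := Real.rpow_pos_of_pos (hUpos x) _
    have h3 := hUlt x
    have h4 : U x - um < 0 := by linarith
    have : 0 < α * U x ^ (2 - p) := mul_pos hα0 h2
    nlinarith
  have hUhalf_ge : ∀ z, z ≤ 0 → um / 2 ≤ U z := by
    intro z hz
    rw [← hU0]
    exact hanti.antitone hz
  have hUhalf_le : ∀ z, 0 ≤ z → U z ≤ um / 2 := by
    intro z hz
    rw [← hU0]
    exact hanti.antitone hz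
  ------------------------------------------------------------------
  -- PART 1 : algebraic decay at +∞ via V = U^(p-1)
  ------------------------------------------------------------------
  set q : ℝ := 1 / (1 - p) with hqdef
  clear_value q
  have hq0 : 0 < q := by rw [hqdef]; positivity
  set V : ℝ → ℝ := fun z => U z ^ (p - 1) with hVdef
  clear_value V
  have hVpos : ∀ z, 0 < V z := by
    intro z
    rw [hVdef]
    exact Real.rpow_pos_of_pos (hUpos z) _
  have hV' : ∀ z, HasDerivAt V ((1 - p) * α * (um - U z)) z := by
    intro z
    rw [hVdef]
    have h := (hUode z).rpow_const (p := p - 1) (Or.inl (ne_of_gt (hUpos z)))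
    convert h using 1
    have key : U z ^ (2 - p) * U z ^ (p - 1 - 1) = 1 := by
      rw [← Real.rpow_add (hUpos z)]
      rw [show (2 - p + (p - 1 - 1) : ℝ) = 0 by ring, Real.rpow_zero]
    linear_combination (-(α * (p - 1) * (U z - um))) * key
  set b₁ : ℝ := (1 - p) * α * (um / 2) with hb₁def
  clear_value b₁
  set b₂ : ℝ := (1 - p) * α * um with hb₂def
  clear_value b₂
  have hb₁0 : 0 < b₁ := by rw [hb₁def]; positivity
  have hb₂0 : 0 < b₂ := by rw [hb₂def]; positivity
  have hb₁₂ : b₁ ≤ b₂ := by rw [hb₁def, hb₂def]; nlinarith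
  -- upper bound on V : V z ≤ V 0 + b₂ z for z ≥ 0
  have hVup : ∀ z, 0 ≤ z → V z ≤ V 0 + b₂ * z := by
    have hmono : Antitone (fun z => V z - b₂ * z) := by
      have hd : ∀ z, HasDerivAt (fun z => V z - b₂ * z) ((1 - p) * α * (um - U z) - b₂) z := by
        intro z
        exact (hV' z).sub (by simpa using (hasDerivAt_id z).const_mul b₂)
      apply antitone_of_deriv_nonpos
      · exact fun z => (hd z).differentiableAt
      · intro z
        rw [(hd z).deriv]
        have := hUpos z
        rw [hb₂def]
        nlinarith
    intro z hz
    have := hmono hz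
    simp only [mul_zero, sub_zero] at this
    linarith
  -- lower bound on V : V 0 + b₁ z ≤ V z for z ≥ 0
  have hVlow : ∀ z, 0 ≤ z → V 0 + b₁ * z ≤ V z := by
    have hd : ∀ z, HasDerivAt (fun z => V z - b₁ * z) ((1 - p) * α * (um - U z) - b₁) z := by
      intro z
      exact (hV' z).sub (by simpa using (hasDerivAt_id z).const_mul b₁)
    have hmono : MonotoneOn (fun z => V z - b₁ * z) (Set.Ici 0) := by
      apply monotoneOn_of_deriv_nonneg (convex_Ici 0)
      · exact fun z _ => (hd z).differentiableAt.continuousAt.continuousWithinAt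
      · exact fun z _ => (hd z).differentiableAt.differentiableWithinAt
      · intro z hz
        rw [interior_Ici] at hz
        rw [(hd z).deriv]
        have hle := hUhalf_le z (le_of_lt hz)
        rw [hb₁def]
        nlinarith
    intro z hz
    have := hmono (Set.self_mem_Ici) (Set.mem_Ici.2 hz) hz
    simp only [mul_zero, sub_zero] at this
    linarith
  -- inversion : U z = (V z) ^ (-q)
  have hUeq : ∀ z, U z = V z ^ (-q) := by
    intro z
    rw [hVdef]
    rw [← Real.rpow_mul (le_of_lt (hUpos z))]
    rw [show (p - 1) * (-q) = 1 by rw [hqdef]; field_simp; ring]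
    rw [Real.rpow_one]
  -- antitonicity of x ↦ x^(-q) on positives
  have hmono_neg : ∀ x y : ℝ, 0 < x → x ≤ y → y ^ (-q) ≤ x ^ (-q) := by
    intro x y hx hxy
    rw [Real.rpow_neg (le_of_lt hx), Real.rpow_neg (by linarith)]
    have h1 : 0 < x ^ q := Real.rpow_pos_of_pos hx q
    have h2 : x ^ q ≤ y ^ q := Real.rpow_le_rpow (le_of_lt hx) hxy (le_of_lt hq0)
    exact inv_anti₀ h1 h2
  -- final two-sided algebraic bound
  have hpart1 : ∀ z : ℝ, 1 ≤ z →
      (V 0 + b₂) ^ (-q) * z ^ (-q) ≤ U z ∧ U z ≤ b₁ ^ (-q) * z ^ (-q) := by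
    intro z hz
    have hz0 : 0 < z := by linarith
    have hlow : b₁ * z ≤ V z := by
      have := hVlow z (le_of_lt hz0)
      have := hVpos 0
      linarith
    have hup : V z ≤ (V 0 + b₂) * z := by
      have h1 := hVup z (le_of_lt hz0)
      have h2 : V 0 * 1 ≤ V 0 * z := by
        have := hVpos 0
        nlinarith
      nlinarith
    constructor
    · rw [hUeq z, ← Real.mul_rpow (by have := hVpos 0; have := hb₂0; linarith) (le_of_lt hz0)]
      exact hmono_neg (V z) ((V 0 + b₂) * z) (hVpos z) hup
    · rw [hUeq z, ← Real.mul_rpow (le_of_lt hb₁0) (le_of_lt hz0)]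
      exact hmono_neg (b₁ * z) (V z) (mul_pos hb₁0 hz0) hlow
  ------------------------------------------------------------------
  -- PART 2 : exponential convergence at -∞
  ------------------------------------------------------------------
  set W : ℝ → ℝ := fun z => um - U z with hWdef
  clear_value W
  have hW0 : ∀ z, 0 < W z := fun z => by
    have := hUlt z
    simp only [hWdef]
    linarith
  have hW' : ∀ z, HasDerivAt W (α * U z ^ (2 - p) * W z) z := by
    intro z
    rw [hWdef]
    have h := (hUode z).const_sub um
    refine h.congr_deriv ?_
    beta_reduce
    ring
  have hlogW : ∀ z, HasDerivAt (fun z => Real.log (W z)) (α * U z ^ (2 - p)) z := by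
    intro z
    have h := (hW' z).log (ne_of_gt (hW0 z))
    convert h using 1
    rw [mul_div_assoc, div_self (ne_of_gt (hW0 z)), mul_one]
  set G : ℝ → ℝ := fun z => Real.log (W z) - α * um ^ (2 - p) * z with hGdef
  clear_value G
  have hG' : ∀ z, HasDerivAt G (α * U z ^ (2 - p) - α * um ^ (2 - p)) z := by
    intro z
    rw [hGdef]
    exact (hlogW z).sub (by simpa using (hasDerivAt_id z).const_mul (α * um ^ (2 - p)))
  have hGanti : Antitone G := by
    apply antitone_of_deriv_nonpos
    · exact fun z => (hG' z).differentiableAt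
    · intro z
      rw [(hG' z).deriv]
      have hle : U z ^ (2 - p) ≤ um ^ (2 - p) :=
        Real.rpow_le_rpow (le_of_lt (hUpos z)) (le_of_lt (hUlt z)) (by linarith)
      nlinarith
  set β : ℝ := (2 - p) * um ^ (1 - p) / (um / 2) ^ (2 - p) with hβdef
  clear_value β
  have hum2 : (0 : ℝ) < (um / 2) ^ (2 - p) := Real.rpow_pos_of_pos (by linarith) _
  have hβ0 : 0 < β := by
    rw [hβdef]
    have : (0 : ℝ) < um ^ (1 - p) := Real.rpow_pos_of_pos hum _
    have h2p : (0 : ℝ) < 2 - p := by linarith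
    positivity
  set H : ℝ → ℝ := fun z => G z + β * W z with hHdef
  clear_value H
  have hH' : ∀ z, HasDerivAt H
      ((α * U z ^ (2 - p) - α * um ^ (2 - p)) + β * (α * U z ^ (2 - p) * W z)) z := by
    intro z
    rw [hHdef]
    exact (hG' z).add ((hW' z).const_mul β)
  have hHmono : MonotoneOn H (Set.Iic 0) := by
    apply monotoneOn_of_deriv_nonneg (convex_Iic 0)
    · exact fun z _ => (hH' z).differentiableAt.continuousAt.continuousWithinAt
    · exact fun z _ => (hH' z).differentiableAt.differentiableWithinAt
    · intro z hz
      rw [interior_Iic] at hz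
      rw [(hH' z).deriv]
      -- Lipschitz bound : um^(2-p) - U^(2-p) ≤ (2-p) um^(1-p) (um - U)
      have h1 : um ^ (2 - p) - U z ^ (2 - p) ≤ (2 - p) * um ^ (1 - p) * W z := by
        have h := rpow_sub_le_aux (hUpos z) (le_of_lt (hUlt z)) (r := 2 - p) (by linarith)
        rw [show (2 - p - 1 : ℝ) = 1 - p by ring] at h
        simpa only [hWdef] using h
      -- U ≥ um/2 on z ≤ 0
      have h2 : (um / 2) ^ (2 - p) ≤ U z ^ (2 - p) :=
        Real.rpow_le_rpow (by linarith) (hUhalf_ge z (le_of_lt hz)) (by linarith)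
      have h3 : β * (um / 2) ^ (2 - p) = (2 - p) * um ^ (1 - p) := by
        rw [hβdef]
        field_simp
      have hWz := hW0 z
      have t1 : (um / 2) ^ (2 - p) * W z ≤ U z ^ (2 - p) * W z :=
        mul_le_mul_of_nonneg_right h2 (le_of_lt hWz)
      have t2 : α * β * ((um / 2) ^ (2 - p) * W z) ≤ α * β * (U z ^ (2 - p) * W z) :=
        mul_le_mul_of_nonneg_left t1 (by positivity)
      have t3 : α * (um ^ (2 - p) - U z ^ (2 - p)) ≤ α * ((2 - p) * um ^ (1 - p) * W z) :=
        mul_le_mul_of_nonneg_left h1 (le_of_lt hα0)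
      have t4 : α * W z * (β * (um / 2) ^ (2 - p)) = α * W z * ((2 - p) * um ^ (1 - p)) := by
        rw [h3]
      nlinarith [t2, t3, t4]
  have hpart2 : ∀ z : ℝ, z ≤ -1 →
      Real.exp (G (-1)) * Real.exp (α * um ^ (2 - p) * z) ≤ um - U z ∧
      um - U z ≤ Real.exp (H (-1)) * Real.exp (α * um ^ (2 - p) * z) := by
    intro z hz
    have hWz : W z = Real.exp (G z + α * um ^ (2 - p) * z) := by
      simp only [hGdef]
      rw [show Real.log (W z) - α * um ^ (2 - p) * z + α * um ^ (2 - p) * z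
        = Real.log (W z) by ring, Real.exp_log (hW0 z)]
    constructor
    · have hGz : G (-1) ≤ G z := hGanti hz
      calc Real.exp (G (-1)) * Real.exp (α * um ^ (2 - p) * z)
          = Real.exp (G (-1) + α * um ^ (2 - p) * z) := (Real.exp_add _ _).symm
        _ ≤ Real.exp (G z + α * um ^ (2 - p) * z) := Real.exp_le_exp.2 (by linarith)
        _ = W z := hWz.symm
        _ = um - U z := by rw [hWdef]
    · have hHz : H z ≤ H (-1) :=
        hHmono (Set.mem_Iic.2 (by linarith)) (Set.mem_Iic.2 (by norm_num)) hz
      have hGH : G z ≤ H z := by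
        simp only [hHdef]
        have := hW0 z
        nlinarith
      calc um - U z = W z := by rw [hWdef]
        _ = Real.exp (G z + α * um ^ (2 - p) * z) := hWz
        _ ≤ Real.exp (H (-1) + α * um ^ (2 - p) * z) := Real.exp_le_exp.2 (by linarith)
        _ = Real.exp (H (-1)) * Real.exp (α * um ^ (2 - p) * z) := Real.exp_add _ _
  refine ⟨(V 0 + b₂) ^ (-q), b₁ ^ (-q), Real.exp (G (-1)), Real.exp (H (-1)),
    ?_, ?_, Real.exp_pos _, ?_, hpart1, hpart2⟩
  · exact Real.rpow_pos_of_pos (by have := hVpos 0; linarith [hb₂0]) _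
  · have : b₁ ≤ V 0 + b₂ := by
      have := hVpos 0
      linarith
    exact hmono_neg b₁ (V 0 + b₂) hb₁0 this
  · apply Real.exp_le_exp.2
    simp only [hHdef]
    have := hW0 (-1)
    nlinarith
end

section
/- Fix p ∈ (0,1), χ > 0, u_- > 0, w_+ > 0, s = √(χ u_-), and let U : ℝ → ℝ be the traveling-wave profile, i.e. the C¹ solution of U'(z) = (χ/(s p)) U(z)^{2−p}(U(z) − u_-) with U(0) = u_- /2 and 0 < U < u_- on ℝ. Then: (i) U is integrable on [z, +∞) for every z ∈ ℝ, while ∫_{−∞}^{0} U(y) dy = +∞; (ii) the function W(z) = w_+ · exp( −(1/s) ∫_{z}^{+∞} U(y) dy ) is well defined, positive, C¹, and satisfies W'(z) = (1/s) U(z) W(z) > 0 for all z; (iii) W(z) → w_+ as z → +∞ and W(z) → 0 as z → −∞. -/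
open Real Filter MeasureTheory Set

/-- integrability of the profile `U` at `+∞`, non-integrability at `-∞`,
and the properties of the second wave component
`W(z) = w₊ exp(-(1/s) ∫_z^∞ U)`: positivity, `C¹` regularity, the ODE `W' = (1/s) U W > 0`,
and the end-state limits `W(+∞) = w₊`, `W(-∞) = 0`. -/
theorem stmt_5 (p χ um wp : ℝ) (hp : 0 < p) (hp1 : p < 1) (hχ : 0 < χ) (hum : 0 < um)
    (hwp : 0 < wp) (s : ℝ) (hs : s = Real.sqrt (χ * um))
    (U : ℝ → ℝ) (hUC : ContDiff ℝ 1 U) (hU0 : U 0 = um / 2)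
    (hUrange : ∀ z, 0 < U z ∧ U z < um)
    (hUode : ∀ z, HasDerivAt U (χ / (s * p) * U z ^ (2 - p) * (U z - um)) z)
    (W : ℝ → ℝ)
    (hW : ∀ z, W z = wp * Real.exp (-(1 / s) * ∫ y in Set.Ici z, U y)) :
    (∀ z : ℝ, IntegrableOn U (Set.Ici z)) ∧
    (∫⁻ y in Set.Iic (0 : ℝ), ENNReal.ofReal (U y)) = ⊤ ∧
    (∀ z : ℝ, 0 < W z) ∧
    ContDiff ℝ 1 W ∧
    (∀ z : ℝ, HasDerivAt W (1 / s * U z * W z) z ∧ 0 < 1 / s * U z * W z) ∧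
    Tendsto W atTop (nhds wp) ∧
    Tendsto W atBot (nhds 0) := by
  have hUpos : ∀ z, 0 < U z := fun z => (hUrange z).1
  have hUlt : ∀ z, U z < um := fun z => (hUrange z).2
  have hs0 : 0 < s := by rw [hs]; exact Real.sqrt_pos.2 (mul_pos hχ hum)
  have hcont : Continuous U := hUC.continuous
  have hInt : ∀ a b : ℝ, IntervalIntegrable U volume a b :=
    fun a b => hcont.intervalIntegrable a b
  -- U is antitone
  have hanti : Antitone U := by
    apply antitone_of_deriv_nonpos (fun z => (hUode z).differentiableAt)
    intro z
    rw [(hUode z).deriv]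
    apply mul_nonpos_of_nonneg_of_nonpos
    · exact mul_nonneg (div_pos hχ (mul_pos hs0 hp)).le (Real.rpow_nonneg (hUpos z).le _)
    · linarith [hUlt z]
  have hge : ∀ y : ℝ, y ≤ 0 → um / 2 ≤ U y := fun y hy => hU0 ▸ hanti hy
  have hle : ∀ y : ℝ, 0 ≤ y → U y ≤ um / 2 := fun y hy => hU0 ▸ hanti hy
  -- derivative of U^p
  have hF : ∀ z, HasDerivAt (fun z => U z ^ p) (χ / s * (U z * (U z - um))) z := by
    intro z
    have h := (hUode z).rpow_const (p := p) (Or.inl (hUpos z).ne')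
    have h1 : U z ^ (2 - p) * U z ^ (p - 1) = U z := by
      rw [← Real.rpow_add (hUpos z)]; norm_num
    have e : χ / (s * p) * U z ^ (2 - p) * (U z - um) * p * U z ^ (p - 1)
        = (χ / (s * p) * p) * (U z ^ (2 - p) * U z ^ (p - 1)) * (U z - um) := by ring
    have e2 : χ / (s * p) * p = χ / s := by field_simp
    rw [e, h1, e2] at h
    convert h using 1
    ring
  set k : ℝ := χ / s * (um / 2) with hk
  have hk0 : 0 < k := by positivity
  set B : ℝ := (um / 2) ^ p / k with hB
  -- key uniform bound on ∫₀^b U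
  have key : ∀ b : ℝ, 0 ≤ b → (∫ y in (0 : ℝ)..b, U y) ≤ B := by
    intro b hb
    have hcont2 : Continuous fun y => χ / s * (U y * (U y - um)) :=
      continuous_const.mul (hcont.mul (hcont.sub continuous_const))
    have hFTC : (∫ y in (0 : ℝ)..b, χ / s * (U y * (U y - um))) = U b ^ p - U 0 ^ p :=
      intervalIntegral.integral_eq_sub_of_hasDerivAt (fun y _ => hF y)
        (hcont2.intervalIntegrable _ _)
    have hmono : (∫ y in (0 : ℝ)..b, k * U y)
        ≤ ∫ y in (0 : ℝ)..b, -(χ / s * (U y * (U y - um))) := by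
      apply intervalIntegral.integral_mono_on hb
        ((continuous_const.mul hcont).intervalIntegrable _ _)
        ((hcont2.neg).intervalIntegrable _ _)
      intro y hy
      have h1 : U y ≤ um / 2 := hle y hy.1
      have h2 : 0 < U y := hUpos y
      have h3 : 0 < χ / s := div_pos hχ hs0
      have h4 := mul_le_mul_of_nonneg_left (by linarith : um / 2 ≤ um - U y)
        (mul_pos h3 h2).le
      show χ / s * (um / 2) * U y ≤ -(χ / s * (U y * (U y - um)))
      nlinarith
    rw [intervalIntegral.integral_neg, hFTC, intervalIntegral.integral_const_mul] at hmono
    have hUb : 0 ≤ U b ^ p := Real.rpow_nonneg (hUpos b).le _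
    have hkk : k * ∫ y in (0 : ℝ)..b, U y ≤ U 0 ^ p := by linarith
    rw [hU0] at hkk
    rw [hB]
    rw [le_div_iff₀ hk0]
    linarith [mul_comm k (∫ y in (0 : ℝ)..b, U y)]
  -- integrability on Ici z
  have hIci : ∀ z : ℝ, IntegrableOn U (Set.Ici z) := by
    intro z
    rw [integrableOn_Ici_iff_integrableOn_Ioi]
    apply integrableOn_Ioi_of_intervalIntegral_norm_bounded
      (um * |z| + B) z (b := fun n : ℕ => max z 0 + n) (l := atTop)
      (fun n => hcont.integrableOn_Ioc)
    · exact tendsto_atTop_add_const_left _ _ tendsto_natCast_atTop_atTop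
    · filter_upwards with n
      have hnorm : (∫ x in z..(max z 0 + n : ℝ), ‖U x‖)
          = ∫ x in z..(max z 0 + n : ℝ), U x := by
        apply intervalIntegral.integral_congr
        intro x _
        exact Real.norm_of_nonneg (hUpos x).le
      rw [hnorm]
      have hsplit : (∫ x in z..(max z 0 + n : ℝ), U x)
          = (∫ x in z..(0 : ℝ), U x) + ∫ x in (0 : ℝ)..(max z 0 + n : ℝ), U x :=
        (intervalIntegral.integral_add_adjacent_intervals (hInt _ _) (hInt _ _)).symm
      have h1 : (∫ x in z..(0 : ℝ), U x) ≤ um * |z| := by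
        have hb := intervalIntegral.norm_integral_le_of_norm_le_const
          (C := um) (f := U) (a := z) (b := 0)
          (fun x _ => by
            rw [Real.norm_eq_abs, abs_of_pos (hUpos x)]; exact (hUlt x).le)
        rw [Real.norm_eq_abs, zero_sub, abs_neg] at hb
        exact le_trans (le_abs_self _) hb
      have h2 : (∫ x in (0 : ℝ)..(max z 0 + n : ℝ), U x) ≤ B :=
        key _ (by positivity)
      rw [hsplit]
      linarith
  have hIoi : ∀ z : ℝ, IntegrableOn U (Set.Ioi z) :=
    fun z => (hIci z).mono_set Ioi_subset_Ici_self
  -- non-integrability at -∞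
  have h2 : (∫⁻ y in Set.Iic (0 : ℝ), ENNReal.ofReal (U y)) = ⊤ := by
    rw [eq_top_iff]
    calc (⊤ : ENNReal) = ENNReal.ofReal (um / 2) * volume (Set.Iic (0 : ℝ)) := by
          rw [Real.volume_Iic, ENNReal.mul_top (by simp [ENNReal.ofReal_eq_zero]; linarith)]
      _ = ∫⁻ _ in Set.Iic (0 : ℝ), ENNReal.ofReal (um / 2) := by
          rw [setLIntegral_const]
      _ ≤ ∫⁻ y in Set.Iic (0 : ℝ), ENNReal.ofReal (U y) := by
          apply setLIntegral_mono (hcont.measurable.ennreal_ofReal)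
          intro y hy
          exact ENNReal.ofReal_le_ofReal (hge y hy)
  -- the tail integral function
  set A : ℝ := ∫ y in Set.Ioi (0 : ℝ), U y with hA
  have hsplit : ∀ z : ℝ, (∫ y in Set.Ioi z, U y) = A - ∫ y in (0 : ℝ)..z, U y := by
    intro z
    rcases le_total z 0 with h | h
    · have hu : Set.Ioc z 0 ∪ Set.Ioi (0 : ℝ) = Set.Ioi z := Set.Ioc_union_Ioi_eq_Ioi h
      have hd : Disjoint (Set.Ioc z 0) (Set.Ioi (0 : ℝ)) := by
        rw [Set.disjoint_left]
        rintro x ⟨_, hx⟩ hx'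
        exact absurd hx' (not_lt.2 hx)
      calc (∫ y in Set.Ioi z, U y) = ∫ y in Set.Ioc z 0 ∪ Set.Ioi (0 : ℝ), U y := by rw [hu]
        _ = (∫ y in Set.Ioc z 0, U y) + A :=
            setIntegral_union hd measurableSet_Ioi
              ((hInt z 0).1.mono_set (by simp [Set.Ioc_subset_Ioc_right, h, Set.uIoc_of_le h]))
              (hIoi 0)
        _ = A - ∫ y in (0 : ℝ)..z, U y := by
            rw [intervalIntegral.integral_symm z 0, intervalIntegral.integral_of_le h]
            ring
    · have hu : Set.Ioc 0 z ∪ Set.Ioi z = Set.Ioi (0 : ℝ) := Set.Ioc_union_Ioi_eq_Ioi h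
      have hd : Disjoint (Set.Ioc 0 z) (Set.Ioi z) := by
        rw [Set.disjoint_left]
        rintro x ⟨_, hx⟩ hx'
        exact absurd hx' (not_lt.2 hx)
      have hAeq : A = (∫ y in Set.Ioc 0 z, U y) + ∫ y in Set.Ioi z, U y := by
        rw [hA, ← hu]
        exact setIntegral_union hd measurableSet_Ioi
          ((hInt 0 z).1.mono_set (by simp [h, Set.uIoc_of_le h]))
          (hIoi z)
      rw [intervalIntegral.integral_of_le h]
      linarith
  -- rewrite W with Ioi
  have hW' : ∀ z, W z = wp * Real.exp (-(1 / s) * ∫ y in Set.Ioi z, U y) := by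
    intro z
    rw [hW z, integral_Ici_eq_integral_Ioi]
  have hWpos : ∀ z, 0 < W z := by
    intro z
    rw [hW z]
    positivity
  -- derivative of tail integral
  have hg : ∀ z : ℝ, HasDerivAt (fun u => ∫ y in Set.Ioi u, U y) (-U z) z := by
    intro z
    have h1 : HasDerivAt (fun u => ∫ y in (0 : ℝ)..u, U y) (U z) z :=
      intervalIntegral.integral_hasDerivAt_right (hInt 0 z)
        (hcont.stronglyMeasurableAtFilter _ _) hcont.continuousAt
    have h2 := (hasDerivAt_const z A).sub h1
    have h3 := h2.congr_of_eventuallyEq (Eventually.of_forall hsplit)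
    simpa using h3
  -- derivative of W
  have hWd : ∀ z : ℝ, HasDerivAt W (1 / s * U z * W z) z := by
    intro z
    have h1 := ((((hg z).const_mul (-(1 / s))).exp).const_mul wp)
    have h2 := h1.congr_of_eventuallyEq (Eventually.of_forall hW')
    refine h2.congr_deriv ?_
    rw [hW' z]
    ring
  have hWdpos : ∀ z : ℝ, 0 < 1 / s * U z * W z := by
    intro z
    have := hWpos z
    have := hUpos z
    positivity
  -- C¹ regularity of W
  have hWC : ContDiff ℝ 1 W := by
    rw [contDiff_one_iff_deriv]
    have hdiff : Differentiable ℝ W := fun z => (hWd z).differentiableAt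
    refine ⟨hdiff, ?_⟩
    have hdW : deriv W = fun z => 1 / s * U z * W z := funext fun z => (hWd z).deriv
    rw [hdW]
    exact (continuous_const.mul hcont).mul hdiff.continuous
  -- limit at +∞
  have hWtop : Tendsto W atTop (nhds wp) := by
    have h1 : Tendsto (fun z => ∫ y in (0 : ℝ)..z, U y) atTop (nhds A) :=
      intervalIntegral_tendsto_integral_Ioi 0 (hIoi 0) tendsto_id
    have h2 : Tendsto (fun z => A - ∫ y in (0 : ℝ)..z, U y) atTop (nhds (A - A)) :=
      tendsto_const_nhds.sub h1
    rw [sub_self] at h2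
    have h3 : Tendsto (fun z => ∫ y in Set.Ioi z, U y) atTop (nhds 0) :=
      h2.congr fun z => (hsplit z).symm
    have h4 : Tendsto (fun z => wp * Real.exp (-(1 / s) * ∫ y in Set.Ioi z, U y)) atTop
        (nhds (wp * Real.exp (-(1 / s) * 0))) :=
      ((Real.continuous_exp.tendsto _).comp (h3.const_mul (-(1 / s)))).const_mul wp
    have h5 := h4.congr fun z => (hW' z).symm
    simpa using h5
  -- limit at -∞
  have hWbot : Tendsto W atBot (nhds 0) := by
    have hsne : s ≠ 0 := hs0.ne'
    have hlin : Tendsto (fun z : ℝ => -(1 / s) * (A - um / 2 * z)) atBot atBot := by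
      have h0 : Tendsto (fun z : ℝ => -(1 / s) * A + um / (2 * s) * z) atBot atBot := by
        apply tendsto_atBot_add_const_left
        exact (tendsto_id (α := ℝ)).const_mul_atBot (by positivity)
      exact h0.congr fun z => by field_simp; ring
    have hexp : Tendsto (fun z => -(1 / s) * ∫ y in Set.Ioi z, U y) atBot atBot := by
      apply tendsto_atBot_mono' atBot ?_ hlin
      filter_upwards [eventually_le_atBot (0 : ℝ)] with z hz
      have hiz : (∫ y in (0 : ℝ)..z, U y) ≤ um / 2 * z := by
        have hm : (∫ _ in z..(0 : ℝ), (um / 2 : ℝ)) ≤ ∫ y in z..(0 : ℝ), U y := by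
          apply intervalIntegral.integral_mono_on hz
            (intervalIntegrable_const) (hInt z 0)
          intro y hy
          exact hge y hy.2
        rw [intervalIntegral.integral_const, smul_eq_mul] at hm
        rw [intervalIntegral.integral_symm z 0]
        nlinarith
      rw [hsplit z]
      have h1s : 0 < 1 / s := by positivity
      have h6 := mul_le_mul_of_nonneg_left hiz (le_of_lt h1s)
      nlinarith [h6]
    have h4 : Tendsto (fun z => wp * Real.exp (-(1 / s) * ∫ y in Set.Ioi z, U y)) atBot
        (nhds (wp * 0)) :=
      (Real.tendsto_exp_atBot.comp hexp).const_mul wp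
    have h5 := h4.congr fun z => (hW' z).symm
    simpa using h5
  exact ⟨hIci, h2, hWpos, hWC, fun z => ⟨hWd z, hWdpos z⟩, hWtop, hWbot⟩
end

section
/- Let β > 0 and K > 0, and let U : ℝ → (0, ∞) be a differentiable function with |U'(z)| ≤ K · U(z) for all z ∈ ℝ. Set w(z) = U(z)^{−β}. Then there exists a constant C > 0, depending only on β and K, such that for every C¹ function f : ℝ → ℝ with ∫_ℝ w f² dz < ∞ and ∫_ℝ w (f')² dz < ∞, one has sup_{z ∈ ℝ} w(z) f(z)² ≤ C ( ∫_ℝ w f² dz + ∫_ℝ w (f')² dz ). -/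
open Real Filter MeasureTheory

/-- the weighted Sobolev inequality with weight `w = U^{-β}`: there is a
constant `C` depending only on `β` and `K` such that for any positive differentiable `U`
with `|U'| ≤ K U` and any `C¹` function `f` with finite weighted `L²` norms of `f` and `f'`,
one has `sup_z w(z) f(z)² ≤ C (∫ w f² + ∫ w (f')²)`. -/
theorem stmt_6 (β K : ℝ) (hβ : 0 < β) (hK : 0 < K) :
    ∃ C : ℝ, 0 < C ∧
      ∀ U : ℝ → ℝ, (∀ z, 0 < U z) → Differentiable ℝ U →
        (∀ z, |deriv U z| ≤ K * U z) →
        ∀ f : ℝ → ℝ, ContDiff ℝ 1 f →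
          Integrable (fun z => U z ^ (-β) * f z ^ 2) →
          Integrable (fun z => U z ^ (-β) * deriv f z ^ 2) →
          ∀ z : ℝ, U z ^ (-β) * f z ^ 2 ≤
            C * ((∫ y, U y ^ (-β) * f y ^ 2) + ∫ y, U y ^ (-β) * deriv f y ^ 2) := by
  refine ⟨β * K + 2, by positivity, ?_⟩
  intro U hU hUd hU' f hf hI1 hI2 z
  set g : ℝ → ℝ := fun z => U z ^ (-β) * f z ^ 2 with hgdef
  set D : ℝ → ℝ := fun z =>
    deriv U z * (-β) * U z ^ (-β - 1) * f z ^ 2 + U z ^ (-β) * (2 * f z * deriv f z) with hDdef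
  have hwpos : ∀ x, (0:ℝ) < U x ^ (-β) := fun x => Real.rpow_pos_of_pos (hU x) _
  have hfd : Differentiable ℝ f := hf.differentiable one_ne_zero
  -- derivative of g
  have hgd : ∀ x, HasDerivAt g (D x) x := by
    intro x
    have h1 : HasDerivAt (fun y => U y ^ (-β)) (deriv U x * (-β) * U x ^ (-β - 1)) x :=
      (hUd x).hasDerivAt.rpow_const (Or.inl (hU x).ne')
    have h2 : HasDerivAt (fun y => f y ^ 2) (2 * f x * deriv f x) x := by
      have := (hfd x).hasDerivAt.fun_pow 2
      simpa [mul_comm] using this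
    have h3 := h1.fun_mul h2
    convert h3 using 1
  have hDeq : ∀ x, deriv g x = D x := fun x => (hgd x).deriv
  -- pointwise bound on |D|
  have hbound : ∀ x, |D x| ≤ (β * K + 1) * (U x ^ (-β) * f x ^ 2 + U x ^ (-β) * deriv f x ^ 2) := by
    intro x
    have hUrw : U x ^ (-β - 1) * U x = U x ^ (-β) := by
      rw [← Real.rpow_add_one (hU x).ne' (-β - 1)]
      norm_num
    have h1 : |deriv U x * (-β) * U x ^ (-β - 1) * f x ^ 2|
        ≤ β * K * (U x ^ (-β) * f x ^ 2) := by
      have hx : |deriv U x * (-β) * U x ^ (-β - 1) * f x ^ 2|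
          = |deriv U x| * β * U x ^ (-β - 1) * f x ^ 2 := by
        rw [abs_mul, abs_mul, abs_mul, abs_neg, abs_of_pos hβ,
          abs_of_pos (Real.rpow_pos_of_pos (hU x) _), abs_of_nonneg (sq_nonneg (f x))]
      rw [hx]
      have h2 : |deriv U x| * β * U x ^ (-β - 1) * f x ^ 2
          ≤ (K * U x) * β * U x ^ (-β - 1) * f x ^ 2 := by
        have := hU' x
        have h3 : (0:ℝ) ≤ β * U x ^ (-β - 1) * f x ^ 2 :=
          mul_nonneg (mul_nonneg hβ.le (Real.rpow_pos_of_pos (hU x) _).le) (sq_nonneg _)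
        nlinarith [Real.rpow_pos_of_pos (hU x) (-β - 1), sq_nonneg (f x)]
      calc |deriv U x| * β * U x ^ (-β - 1) * f x ^ 2
          ≤ (K * U x) * β * U x ^ (-β - 1) * f x ^ 2 := h2
        _ = β * K * (U x ^ (-β - 1) * U x * f x ^ 2) := by ring
        _ = β * K * (U x ^ (-β) * f x ^ 2) := by rw [hUrw]
    have h2 : |U x ^ (-β) * (2 * f x * deriv f x)|
        ≤ U x ^ (-β) * f x ^ 2 + U x ^ (-β) * deriv f x ^ 2 := by
      rw [abs_mul, abs_of_pos (hwpos x)]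
      have : |2 * f x * deriv f x| ≤ f x ^ 2 + deriv f x ^ 2 := by
        have h := abs_mul (2 * f x) (deriv f x)
        rw [h, abs_mul]
        have := two_mul_le_add_sq (|f x|) (|deriv f x|)
        simpa [sq_abs, abs_two] using this
      have hw := (hwpos x).le
      nlinarith
    calc |D x| ≤ |deriv U x * (-β) * U x ^ (-β - 1) * f x ^ 2|
          + |U x ^ (-β) * (2 * f x * deriv f x)| := abs_add_le _ _
      _ ≤ β * K * (U x ^ (-β) * f x ^ 2)
          + (U x ^ (-β) * f x ^ 2 + U x ^ (-β) * deriv f x ^ 2) := add_le_add h1 h2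
      _ ≤ (β * K + 1) * (U x ^ (-β) * f x ^ 2 + U x ^ (-β) * deriv f x ^ 2) := by
          nlinarith [mul_nonneg (mul_nonneg hβ.le hK.le)
            (mul_nonneg (hwpos x).le (sq_nonneg (deriv f x)))]
  -- integrability of the bound and of D
  have hhint : Integrable (fun x => (β * K + 1) *
      (U x ^ (-β) * f x ^ 2 + U x ^ (-β) * deriv f x ^ 2)) := (hI1.add hI2).const_mul _
  have hDmeas : AEStronglyMeasurable D volume := by
    have : D = deriv g := funext fun x => (hDeq x).symm
    rw [this]
    exact (measurable_deriv g).aestronglyMeasurable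
  have hDint : Integrable D := by
    refine hhint.mono' hDmeas (Filter.Eventually.of_forall fun x => ?_)
    simpa using hbound x
  -- nonnegativity of the integrals
  have hg0 : ∀ x, (0:ℝ) ≤ g x := fun x => mul_nonneg (hwpos x).le (sq_nonneg _)
  have hI1nn : (0:ℝ) ≤ ∫ y, U y ^ (-β) * f y ^ 2 :=
    integral_nonneg fun x => hg0 x
  have hI2nn : (0:ℝ) ≤ ∫ y, U y ^ (-β) * deriv f y ^ 2 :=
    integral_nonneg fun x => mul_nonneg (hwpos x).le (sq_nonneg _)
  -- find a good point y in [z-1, z]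
  set μ : Measure ℝ := volume.restrict (Set.Icc (z - 1) z) with hμdef
  haveI : IsProbabilityMeasure μ := by
    constructor
    rw [hμdef, Measure.restrict_apply_univ, Real.volume_Icc]
    norm_num
  have hNnull : μ (Set.Icc (z - 1) z)ᶜ = 0 := by
    rw [hμdef, Measure.restrict_apply (measurableSet_Icc.compl)]
    simp
  obtain ⟨y, hyN, hy⟩ := exists_notMem_null_le_integral (hI1.restrict) hNnull
  have hyIcc : y ∈ Set.Icc (z - 1) z := by simpa using hyN
  have hyz : y ≤ z := hyIcc.2
  -- the set integral is at most the full integral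
  have hset : (∫ a, U a ^ (-β) * f a ^ 2 ∂μ) ≤ ∫ y, U y ^ (-β) * f y ^ 2 := by
    rw [hμdef]
    exact setIntegral_le_integral hI1 (Filter.Eventually.of_forall hg0)
  have hgy : g y ≤ ∫ y, U y ^ (-β) * f y ^ 2 := le_trans hy hset
  -- FTC
  have hFTC : (∫ t in y..z, D t) = g z - g y := by
    apply intervalIntegral.integral_eq_sub_of_hasDerivAt
    · intro x _; exact hgd x
    · exact hDint.intervalIntegrable
  -- bound the interval integral of D
  have habs : (∫ t in y..z, D t) ≤ ∫ t, |D t| := by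
    calc (∫ t in y..z, D t) ≤ |∫ t in y..z, D t| := le_abs_self _
      _ ≤ ∫ t in y..z, |D t| := intervalIntegral.abs_integral_le_integral_abs hyz
      _ = ∫ t in Set.Ioc y z, |D t| := intervalIntegral.integral_of_le hyz
      _ ≤ ∫ t, |D t| :=
          setIntegral_le_integral hDint.abs
            (Filter.Eventually.of_forall fun x => abs_nonneg _)
  have hDabs : (∫ t, |D t|) ≤ (β * K + 1) *
      ((∫ y, U y ^ (-β) * f y ^ 2) + ∫ y, U y ^ (-β) * deriv f y ^ 2) := by
    have : (∫ t, |D t|) ≤ ∫ x, (β * K + 1) *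
        (U x ^ (-β) * f x ^ 2 + U x ^ (-β) * deriv f x ^ 2) :=
      integral_mono hDint.abs hhint hbound
    calc (∫ t, |D t|) ≤ _ := this
      _ = (β * K + 1) * ∫ x, (U x ^ (-β) * f x ^ 2 + U x ^ (-β) * deriv f x ^ 2) :=
          integral_const_mul _ _
      _ = (β * K + 1) * ((∫ y, U y ^ (-β) * f y ^ 2) + ∫ y, U y ^ (-β) * deriv f y ^ 2) := by
          rw [integral_add hI1 hI2]
  -- conclude
  have hgz : g z = g y + ∫ t in y..z, D t := by rw [hFTC]; ring
  have : g z ≤ (∫ y, U y ^ (-β) * f y ^ 2) + (β * K + 1) *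
      ((∫ y, U y ^ (-β) * f y ^ 2) + ∫ y, U y ^ (-β) * deriv f y ^ 2) := by
    rw [hgz]
    exact add_le_add hgy (le_trans habs hDabs)
  have hβK : (0:ℝ) ≤ β * K := by positivity
  calc U z ^ (-β) * f z ^ 2 = g z := rfl
    _ ≤ _ := this
    _ ≤ (β * K + 2) * ((∫ y, U y ^ (-β) * f y ^ 2) + ∫ y, U y ^ (-β) * deriv f y ^ 2) := by
        nlinarith
end
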